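/- Let μ > 0 and f ∈ C²([0,1]). Then, for every x ∈ [0,1], lim_{n → +∞} n [𝓛ₙᴷ(f, x) − f(x)] = ln_μ(x) [ f_μ'(x) (1/2 + (x − x²)/(2(1+μ)) − x) + f_μ''(x) (x − x²)/2 ], where f_μ(x) := f(x)/ln_μ(x). -/

import Mathlib

open MeasureTheory Filter Set

/-- The logarithmic weight `ln_μ(x) = ln(1+μ+x)`. -/
noncomputable def lnMu (μ x : ℝ) : ℝ := Real.log (1 + μ + x)

/-- The function `a_{n+1}(x)` from the paper. -/
noncomputable def aFun (μ : ℝ) (n : ℕ) (x : ℝ) : ℝ :=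
  Real.log (1 + x / (((n : ℝ) + 1) * (1 + μ))) /
    Real.log (1 + 1 / (((n : ℝ) + 1) * (1 + μ)))

/-- Bernstein basis polynomial `p_{n,k}(x) = C(n,k) x^k (1-x)^{n-k}`. -/
noncomputable def bern (n k : ℕ) (x : ℝ) : ℝ :=
  (n.choose k : ℝ) * x ^ k * (1 - x) ^ (n - k)

/-- The Kantorovich logarithmic operator `𝓛ₙᴷ(f,x)`. -/
noncomputable def LK (μ : ℝ) (n : ℕ) (f : ℝ → ℝ) (x : ℝ) : ℝ :=
  lnMu μ x * ∑ k ∈ Finset.range (n + 1),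
    bern n k (aFun μ n x) * ((n : ℝ) + 1) *
      ∫ t in ((k : ℝ) / ((n : ℝ) + 1))..(((k : ℝ) + 1) / ((n : ℝ) + 1)), f t / lnMu μ t

/-- `γ_n := max_{x ∈ [0,1]} |a_{n+1}(x) - x|`. -/
noncomputable def gammaN (μ : ℝ) (n : ℕ) : ℝ :=
  ⨆ x : Set.Icc (0 : ℝ) 1, |aFun μ n (x : ℝ) - (x : ℝ)|

/-- Unweighted L^p norm `(∫₀¹ |f|^p)^(1/p)` on [0,1]. -/
noncomputable def normP (p : ℝ) (f : ℝ → ℝ) : ℝ :=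
  (∫ x in (0:ℝ)..1, |f x| ^ p) ^ (1 / p)

/-- Weighted L^p norm `(∫₀¹ |f/ln_μ|^p)^(1/p)` on [0,1]. -/
noncomputable def normPMu (μ p : ℝ) (f : ℝ → ℝ) : ℝ :=
  (∫ x in (0:ℝ)..1, |f x / lnMu μ x| ^ p) ^ (1 / p)

/-!
With `g = f / ln_μ ∈ C²[0,1]`, the operator is `ln_μ(x) Kₙ(g, a_{n+1}(x))`, where `Kₙ(g, a)` is
the Kantorovich operator whose Bernstein basis is evaluated at the node `a`. For nodes with
`n (aₙ - x) → L`, Taylor's formula `g t = g x + g' x (t - x) + g'' x (t - x)² / 2 + R t`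
reduces everything to moments of `Kₙ`: the first two moments of the binomial distribution give
`n Kₙ(t - x) → L - x + 1/2` and `n Kₙ((t - x)²) → x (1 - x)`, while the bound
`|R t| ≤ ε (t - x)² + K (t - x)⁴` on `[0,1]` together with the fourth-moment estimate
`n Kₙ((t - x)⁴) → 0` kills the remainder. Finally `log (1 + y) = y - y² / 2 + O(y³)` gives
`n (a_{n+1}(x) - x) → (x - x²) / (2 (1 + μ))`.
-/

open Topology

lemma bern_nonneg {n k : ℕ} {a : ℝ} (ha : a ∈ Icc (0 : ℝ) 1) : 0 ≤ bern n k a := by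
  have := ha.1
  have : 0 ≤ 1 - a := sub_nonneg.2 ha.2
  unfold bern
  positivity

lemma sum_bern (n : ℕ) (a : ℝ) : ∑ k ∈ Finset.range (n + 1), bern n k a = 1 := by
  simpa [bern, mul_comm, mul_assoc, mul_left_comm] using (add_pow a (1 - a) n).symm

lemma sum_bern_succ_mul (n : ℕ) (a : ℝ) (φ : ℕ → ℝ) :
    ∑ k ∈ Finset.range (n + 2), bern (n + 1) k a * (k * φ k) =
      (n + 1) * a * ∑ k ∈ Finset.range (n + 1), bern n k a * φ (k + 1) := by
  rw [Finset.sum_range_succ', Finset.mul_sum]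
  simp only [CharP.cast_eq_zero, zero_mul, mul_zero, add_zero]
  refine Finset.sum_congr rfl fun k _ => ?_
  have h : ((n + 1).choose (k + 1) : ℝ) * (k + 1) = (n + 1) * n.choose k := by
    exact_mod_cast (Nat.add_one_mul_choose_eq n k).symm
  unfold bern
  rw [Nat.succ_sub_succ]
  push_cast
  linear_combination a * a ^ k * (1 - a) ^ (n - k) * φ (k + 1) * h

lemma cast_descFactorial_succ (k j : ℕ) :
    (k.descFactorial (j + 1) : ℝ) = k.descFactorial j * (k - j) := by
  rcases le_or_gt j k with hjk | hkj
  · rw [Nat.descFactorial_succ, Nat.cast_mul, Nat.cast_sub hjk, mul_comm]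
  · rw [Nat.descFactorial_eq_zero_iff_lt.2 hkj, Nat.descFactorial_eq_zero_iff_lt.2 (by omega)]
    simp

lemma sum_bern_mul_descFactorial (n j : ℕ) (a : ℝ) :
    ∑ k ∈ Finset.range (n + 1), bern n k a * k.descFactorial j = n.descFactorial j * a ^ j := by
  induction j generalizing n with
  | zero => simpa using sum_bern n a
  | succ j ih =>
    cases n with
    | zero => simp [bern]
    | succ n =>
      have hk : ∀ k : ℕ, (k.descFactorial (j + 1) : ℝ) = k * (k - 1).descFactorial j := by
        rintro (_ | k)
        · simp
        · rw [Nat.succ_descFactorial_succ]; push_cast; simp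
      simp only [hk, sum_bern_succ_mul, Nat.add_sub_cancel, ih, Nat.succ_descFactorial_succ]
      push_cast
      ring

lemma sum_bern_mul_sub (n : ℕ) (a X : ℝ) :
    ∑ k ∈ Finset.range (n + 1), bern n k a * (k - X) = n * a - X := by
  have h : ∀ k : ℕ, (k : ℝ) - X = k.descFactorial 1 - X * k.descFactorial 0 := by
    intro k; simp
  simp only [h, mul_sub, Finset.sum_sub_distrib, mul_left_comm _ X, ← Finset.mul_sum]
  simp only [sum_bern_mul_descFactorial]
  simp

lemma sum_bern_mul_sub_sq (n : ℕ) (a X : ℝ) :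
    ∑ k ∈ Finset.range (n + 1), bern n k a * (k - X) ^ 2 =
      n * a * (1 - a) + (n * a - X) ^ 2 := by
  have h : ∀ k : ℕ, ((k : ℝ) - X) ^ 2 = k.descFactorial 2 + (1 - 2 * X) * k.descFactorial 1
      + X ^ 2 * k.descFactorial 0 := by
    intro k; simp only [cast_descFactorial_succ, Nat.descFactorial_zero]; push_cast; ring
  simp only [h, mul_add, Finset.sum_add_distrib, mul_left_comm _ (1 - 2 * X),
    mul_left_comm _ (X ^ 2), ← Finset.mul_sum]
  simp only [sum_bern_mul_descFactorial]
  simp only [cast_descFactorial_succ, Nat.descFactorial_zero]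
  push_cast
  ring

lemma sum_bern_mul_sub_pow_four (n : ℕ) (a : ℝ) :
    ∑ k ∈ Finset.range (n + 1), bern n k a * (k - n * a) ^ 4 =
      n * a * (1 - a) * (1 + 3 * (n - 2) * a * (1 - a)) := by
  set X : ℝ := n * a
  have h : ∀ k : ℕ, ((k : ℝ) - X) ^ 4 = k.descFactorial 4 + (6 - 4 * X) * k.descFactorial 3
      + (7 - 12 * X + 6 * X ^ 2) * k.descFactorial 2
      + (1 - 4 * X + 6 * X ^ 2 - 4 * X ^ 3) * k.descFactorial 1 + X ^ 4 * k.descFactorial 0 := by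
    intro k; simp only [cast_descFactorial_succ, Nat.descFactorial_zero]; push_cast; ring
  simp only [h, mul_add, Finset.sum_add_distrib, mul_left_comm _ (6 - 4 * X),
    mul_left_comm _ (7 - 12 * X + 6 * X ^ 2), mul_left_comm _ (1 - 4 * X + 6 * X ^ 2 - 4 * X ^ 3),
    mul_left_comm _ (X ^ 4), ← Finset.mul_sum]
  simp only [sum_bern_mul_descFactorial]
  simp only [cast_descFactorial_succ, Nat.descFactorial_zero]
  push_cast
  ring

lemma pow_four_add_le (u v : ℝ) : (u + v) ^ 4 ≤ 8 * (u ^ 4 + v ^ 4) := by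
  nlinarith [sq_nonneg (u - v), sq_nonneg (u + v), sq_nonneg (u ^ 2 - v ^ 2),
    mul_self_nonneg (u * v)]

lemma sum_bern_mul_sub_pow_four_le (n : ℕ) {a : ℝ} (ha : a ∈ Icc (0 : ℝ) 1) (X : ℝ) :
    ∑ k ∈ Finset.range (n + 1), bern n k a * (k - X) ^ 4 ≤ 8 * (n ^ 2 + (n * a - X) ^ 4) := by
  have hcentral : ∑ k ∈ Finset.range (n + 1), bern n k a * (k - n * a) ^ 4 ≤ n ^ 2 := by
    rw [sum_bern_mul_sub_pow_four]
    set p := a * (1 - a)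
    have hp : 0 ≤ p := mul_nonneg ha.1 (sub_nonneg.2 ha.2)
    have hp' : p ≤ 1 / 4 := by nlinarith [sq_nonneg (a - 1 / 2)]
    have hn0 : (0 : ℝ) ≤ n := n.cast_nonneg
    have hn : (n : ℝ) ≤ n ^ 2 := by
      rcases n with _ | n
      · simp
      · push_cast; nlinarith
    have h1 : n * p ≤ n / 4 := by nlinarith
    have h2 : n ^ 2 * p ^ 2 ≤ n ^ 2 / 16 := by nlinarith [mul_le_mul hp' hp' hp (by norm_num)]
    have h3 : 0 ≤ n * p ^ 2 := by positivity
    calc (n : ℝ) * a * (1 - a) * (1 + 3 * (n - 2) * a * (1 - a))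
        = n * p + 3 * (n ^ 2 * p ^ 2) - 6 * (n * p ^ 2) := by ring
      _ ≤ n ^ 2 := by linarith
  calc ∑ k ∈ Finset.range (n + 1), bern n k a * (k - X) ^ 4
      ≤ ∑ k ∈ Finset.range (n + 1),
          (8 * (bern n k a * (k - n * a) ^ 4) + 8 * (n * a - X) ^ 4 * bern n k a) := by
        refine Finset.sum_le_sum fun k _ => ?_
        have := mul_le_mul_of_nonneg_left (pow_four_add_le (k - n * a) (n * a - X))
          (bern_nonneg (n := n) (k := k) ha)
        ring_nf at this ⊢
        linarith
    _ ≤ 8 * (n ^ 2 + (n * a - X) ^ 4) := by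
        rw [Finset.sum_add_distrib, ← Finset.mul_sum, ← Finset.mul_sum, sum_bern]
        linarith

/-- `LK μ n f x = lnMu μ x * kantorovich n (fun t => f t / lnMu μ t) (aFun μ n x)`. -/
noncomputable def kantorovich (n : ℕ) (g : ℝ → ℝ) (a : ℝ) : ℝ :=
  ∑ k ∈ Finset.range (n + 1), bern n k a * ((n : ℝ) + 1) *
    ∫ t in ((k : ℝ) / ((n : ℝ) + 1))..(((k : ℝ) + 1) / ((n : ℝ) + 1)), g t

section kantorovich

variable {n : ℕ} {g h : ℝ → ℝ} {a : ℝ}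

lemma uIcc_subset_Icc_of_mem_range {k : ℕ} (hk : k ∈ Finset.range (n + 1)) :
    uIcc ((k : ℝ) / (n + 1)) ((k + 1) / (n + 1)) ⊆ Icc 0 1 := by
  have hkn : (k : ℝ) + 1 ≤ n + 1 := by exact_mod_cast Finset.mem_range.1 hk
  rw [uIcc_of_le (by gcongr; linarith)]
  exact Icc_subset_Icc (by positivity) ((div_le_one (by positivity)).2 hkn)

lemma kantorovich_add (hg : ContinuousOn g (Icc 0 1)) (hh : ContinuousOn h (Icc 0 1)) :
    kantorovich n (fun t => g t + h t) a = kantorovich n g a + kantorovich n h a := by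
  unfold kantorovich
  rw [← Finset.sum_add_distrib]
  refine Finset.sum_congr rfl fun k hk => ?_
  have hs := uIcc_subset_Icc_of_mem_range hk
  rw [intervalIntegral.integral_add ((hg.mono hs).intervalIntegrable)
    ((hh.mono hs).intervalIntegrable), mul_add]

lemma kantorovich_const_mul (c : ℝ) :
    kantorovich n (fun t => c * g t) a = c * kantorovich n g a := by
  simp only [kantorovich, intervalIntegral.integral_const_mul, Finset.mul_sum]
  exact Finset.sum_congr rfl fun _ _ => by ring

lemma kantorovich_const (c : ℝ) : kantorovich n (fun _ => c) a = c := by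
  simp only [kantorovich, intervalIntegral.integral_const, smul_eq_mul]
  have hn : (n : ℝ) + 1 ≠ 0 := by positivity
  calc _ = ∑ k ∈ Finset.range (n + 1), bern n k a * c := by
        refine Finset.sum_congr rfl fun _ _ => ?_
        field_simp
        ring
    _ = c := by rw [← Finset.sum_mul, sum_bern, one_mul]

lemma abs_kantorovich_le (ha : a ∈ Icc (0 : ℝ) 1) (hg : ContinuousOn g (Icc 0 1))
    (hh : ContinuousOn h (Icc 0 1)) (hgh : ∀ t ∈ Icc (0 : ℝ) 1, |g t| ≤ h t) :
    |kantorovich n g a| ≤ kantorovich n h a := by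
  refine (Finset.abs_sum_le_sum_abs _ _).trans (Finset.sum_le_sum fun k hk => ?_)
  have hs := uIcc_subset_Icc_of_mem_range hk
  have hle : (k : ℝ) / (n + 1) ≤ (k + 1) / (n + 1) := by gcongr; linarith
  rw [uIcc_of_le hle] at hs
  have hb : 0 ≤ bern n k a * (n + 1) := mul_nonneg (bern_nonneg ha) (by positivity)
  rw [abs_mul, abs_of_nonneg hb]
  refine mul_le_mul_of_nonneg_left ((intervalIntegral.abs_integral_le_integral_abs hle).trans ?_) hb
  exact intervalIntegral.integral_mono_on hle ((hg.mono hs).intervalIntegrable_of_Icc hle).abs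
    ((hh.mono hs).intervalIntegrable_of_Icc hle) fun t ht => hgh t (hs ht)

lemma kantorovich_sub_pow (x : ℝ) (j : ℕ) :
    kantorovich n (fun t => (t - x) ^ j) a = ∑ k ∈ Finset.range (n + 1), bern n k a *
      (((k - (n + 1) * x + 1) ^ (j + 1) - (k - (n + 1) * x) ^ (j + 1)) /
        ((j + 1) * (n + 1) ^ j)) := by
  unfold kantorovich
  refine Finset.sum_congr rfl fun k _ => ?_
  have hn : (n : ℝ) + 1 ≠ 0 := by positivity
  rw [intervalIntegral.integral_comp_sub_right (fun t => t ^ j), integral_pow, mul_assoc]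
  congr 1
  rw [show (k + 1) / (n + 1) - x = (k - (n + 1) * x + 1) / ((n : ℝ) + 1) by field_simp; ring,
    show k / (n + 1) - x = (k - (n + 1) * x) / ((n : ℝ) + 1) by field_simp, div_pow, div_pow]
  field_simp
  ring

lemma kantorovich_sub (x : ℝ) :
    kantorovich n (fun t => t - x) a = (n * a - (n + 1) * x + 1 / 2) / (n + 1) := by
  have h : (fun t => t - x) = fun t => (t - x) ^ 1 := by simp only [pow_one]
  rw [h, kantorovich_sub_pow]
  calc _ = ∑ k ∈ Finset.range (n + 1),
          (bern n k a * (k - (n + 1) * x) + bern n k a / 2) / (n + 1) := by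
        refine Finset.sum_congr rfl fun k _ => ?_
        field_simp
        ring
    _ = _ := by
        rw [← Finset.sum_div, Finset.sum_add_distrib, ← Finset.sum_div, sum_bern_mul_sub, sum_bern]

lemma kantorovich_sub_sq (x : ℝ) :
    kantorovich n (fun t => (t - x) ^ 2) a =
      (n * a * (1 - a) + (n * a - (n + 1) * x) ^ 2 + (n * a - (n + 1) * x) + 1 / 3) /
        (n + 1) ^ 2 := by
  rw [kantorovich_sub_pow]
  calc _ = ∑ k ∈ Finset.range (n + 1), (bern n k a * (k - (n + 1) * x) ^ 2
          + bern n k a * (k - (n + 1) * x) + bern n k a / 3) / (n + 1) ^ 2 := by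
        refine Finset.sum_congr rfl fun k _ => ?_
        field_simp
        ring
    _ = _ := by
        rw [← Finset.sum_div, Finset.sum_add_distrib, Finset.sum_add_distrib, ← Finset.sum_div,
          sum_bern_mul_sub_sq, sum_bern_mul_sub, sum_bern]

lemma kantorovich_sub_pow_four_le (ha : a ∈ Icc (0 : ℝ) 1) (x : ℝ) :
    kantorovich n (fun t => (t - x) ^ 4) a ≤
      4 * (8 * (n ^ 2 + (n * a - (n + 1) * x) ^ 4) + 1) / (n + 1) ^ 4 := by
  rw [kantorovich_sub_pow]
  calc _ ≤ ∑ k ∈ Finset.range (n + 1),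
          4 * (bern n k a * (k - (n + 1) * x) ^ 4 + bern n k a) / (n + 1) ^ 4 := by
        refine Finset.sum_le_sum fun k _ => ?_
        set u : ℝ := k - (n + 1) * x
        have hu : ((u + 1) ^ 5 - u ^ 5) / 5 ≤ 4 * (u ^ 4 + 1) := by
          nlinarith [sq_nonneg (u ^ 2 + u), sq_nonneg (u + 1), sq_nonneg u, sq_nonneg (u ^ 2 - 1)]
        calc bern n k a * (((u + 1) ^ (4 + 1) - u ^ (4 + 1)) / (((4 : ℕ) + 1) * (n + 1) ^ 4))
            = bern n k a * (((u + 1) ^ 5 - u ^ 5) / 5) / (n + 1) ^ 4 := by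
              rw [show ((4 : ℕ) : ℝ) + 1 = 5 by norm_num, ← div_div, mul_div_assoc]
          _ ≤ bern n k a * (4 * (u ^ 4 + 1)) / (n + 1) ^ 4 := by
              gcongr
              exact bern_nonneg ha
          _ = _ := by ring
    _ ≤ _ := by
        rw [← Finset.sum_div, ← Finset.mul_sum, Finset.sum_add_distrib, sum_bern]
        gcongr
        exact sum_bern_mul_sub_pow_four_le n ha _

end kantorovich

lemma isLittleO_taylor_two {g : ℝ → ℝ} {x : ℝ} (hg : ContDiffOn ℝ 2 g (Icc 0 1))
    (hx : x ∈ Icc (0 : ℝ) 1) :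
    (fun t => g t - g x - derivWithin g (Icc 0 1) x * (t - x)
        - derivWithin (derivWithin g (Icc 0 1)) (Icc 0 1) x / 2 * (t - x) ^ 2)
      =o[𝓝[Icc 0 1] x] fun t => (t - x) ^ 2 := by
  refine (taylor_isLittleO (n := 2) (convex_Icc 0 1) hx hg).congr_left fun t => ?_
  simp only [taylor_within_apply, Finset.sum_range_succ, Finset.sum_range_zero,
    iteratedDerivWithin_zero, iteratedDerivWithin_succ, smul_eq_mul]
  norm_num
  ring

lemma exists_abs_le_sq_add_pow_four {R : ℝ → ℝ} {s : Set ℝ} {x : ℝ} (hs : IsCompact s)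
    (hR : ContinuousOn R s) (ho : R =o[𝓝[s] x] fun t => (t - x) ^ 2) {ε : ℝ} (hε : 0 < ε) :
    ∃ K, ∀ t ∈ s, |R t| ≤ ε * (t - x) ^ 2 + K * (t - x) ^ 4 := by
  obtain ⟨δ, hδ, hnear⟩ :=
    Metric.eventually_nhds_iff.1 (eventually_nhdsWithin_iff.1 (ho.def hε))
  obtain ⟨C, hC⟩ := hs.exists_bound_of_continuousOn hR
  refine ⟨max C 0 / δ ^ 4, fun t ht => ?_⟩
  have h2 : 0 ≤ ε * (t - x) ^ 2 := by positivity
  have h4 : 0 ≤ max C 0 / δ ^ 4 * (t - x) ^ 4 := by positivity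
  rcases lt_or_ge |t - x| δ with hclose | hfar
  · have := hnear hclose ht
    simp only [Real.norm_eq_abs, abs_pow, sq_abs] at this
    linarith
  · have hδ4 : δ ^ 4 ≤ (t - x) ^ 4 := by
      simpa [Even.pow_abs ⟨2, rfl⟩] using pow_le_pow_left₀ hδ.le hfar 4
    have : max C 0 ≤ max C 0 / δ ^ 4 * (t - x) ^ 4 := by
      rw [div_mul_eq_mul_div, le_div_iff₀ (by positivity)]
      exact mul_le_mul_of_nonneg_left hδ4 (le_max_right _ _)
    have := hC t ht
    rw [Real.norm_eq_abs] at this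
    linarith [le_max_left C 0]

lemma tendsto_zero_of_forall_abs_le {u v w : ℕ → ℝ} {A : ℝ} (hv : Tendsto v atTop (𝓝 A))
    (hw : Tendsto w atTop (𝓝 0)) (h : ∀ ε > 0, ∃ K, ∀ n, |u n| ≤ ε * v n + K * w n) :
    Tendsto u atTop (𝓝 0) := by
  rw [Metric.tendsto_atTop]
  intro ε hε
  obtain ⟨K, hK⟩ := h (ε / (2 * (|A| + 1))) (by positivity)
  have hv' : ∀ᶠ n in atTop, v n < |A| + 1 :=
    hv.eventually (gt_mem_nhds (by linarith [le_abs_self A]))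
  have hw' : ∀ᶠ n in atTop, |K * w n| < ε / 2 := by
    have := Metric.tendsto_nhds.1 (by simpa using hw.const_mul K) (ε / 2) (by positivity)
    simpa [Real.dist_eq] using this
  obtain ⟨N, hN⟩ := eventually_atTop.1 (hv'.and hw')
  refine ⟨N, fun n hn => ?_⟩
  obtain ⟨hvn, hwn⟩ := hN n hn
  rw [Real.dist_eq, sub_zero]
  calc |u n| ≤ ε / (2 * (|A| + 1)) * v n + K * w n := hK n
    _ ≤ ε / (2 * (|A| + 1)) * (|A| + 1) + |K * w n| := by
        gcongr
        exact le_abs_self _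
    _ < ε / 2 + ε / 2 := by
        have : ε / (2 * (|A| + 1)) * (|A| + 1) = ε / 2 := by field_simp
        linarith
    _ = ε := add_halves ε

section nodes

variable {a : ℕ → ℝ} {x L : ℝ}

lemma tendsto_of_tendsto_natCast_mul_sub
    (haL : Tendsto (fun n : ℕ => n * (a n - x)) atTop (𝓝 L)) :
    Tendsto a atTop (𝓝 x) := by
  have h := (haL.div_atTop tendsto_natCast_atTop_atTop).const_add x
  rw [add_zero] at h
  refine h.congr' ?_
  filter_upwards [eventually_ne_atTop 0] with n hn
  field_simp
  ring

lemma tendsto_natCast_div_add_one_pow (j : ℕ) :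
    Tendsto (fun n : ℕ => ((n : ℝ) / (n + 1)) ^ j) atTop (𝓝 1) := by
  simpa using (tendsto_natCast_div_add_atTop (1 : ℝ)).pow j

lemma tendsto_natCast_mul_kantorovich_sub
    (haL : Tendsto (fun n : ℕ => n * (a n - x)) atTop (𝓝 L)) :
    Tendsto (fun n : ℕ => n * kantorovich n (fun t => t - x) (a n)) atTop
      (𝓝 (L - x + 1 / 2)) := by
  have hc := (haL.sub_const x).add_const (1 / 2)
  simpa using ((tendsto_natCast_div_add_atTop (1 : ℝ)).mul hc).congr fun n => by
    rw [kantorovich_sub]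
    field_simp
    ring

lemma tendsto_natCast_mul_kantorovich_sub_sq
    (haL : Tendsto (fun n : ℕ => n * (a n - x)) atTop (𝓝 L)) :
    Tendsto (fun n : ℕ => n * kantorovich n (fun t => (t - x) ^ 2) (a n)) atTop
      (𝓝 (x * (1 - x))) := by
  have ha := tendsto_of_tendsto_natCast_mul_sub haL
  have hc := haL.sub_const x
  have h := ((tendsto_natCast_div_add_one_pow 2).mul (ha.mul (ha.const_sub 1))).add
    (((tendsto_natCast_div_add_atTop (1 : ℝ)).mul tendsto_one_div_add_atTop_nhds_zero_nat).mul
      (((hc.pow 2).add hc).add_const (1 / 3 : ℝ)))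
  simpa using h.congr fun n => by
    rw [kantorovich_sub_sq]
    field_simp
    ring

lemma tendsto_natCast_mul_kantorovich_sub_pow_four (ha : ∀ n, a n ∈ Icc (0 : ℝ) 1)
    (haL : Tendsto (fun n : ℕ => n * (a n - x)) atTop (𝓝 L)) :
    Tendsto (fun n : ℕ => n * kantorovich n (fun t => (t - x) ^ 4) (a n)) atTop (𝓝 0) := by
  have hc := haL.sub_const x
  have hinv : Tendsto (fun n : ℕ => 1 / ((n : ℝ) + 1)) atTop (𝓝 0) :=
    tendsto_one_div_add_atTop_nhds_zero_nat
  have hbound := ((tendsto_natCast_div_add_one_pow 3).mul hinv).const_mul (32 : ℝ) |>.add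
    (((tendsto_natCast_div_add_atTop (1 : ℝ)).mul (hinv.pow 3)).mul
      (((hc.pow 4).const_mul (32 : ℝ)).add_const (4 : ℝ)))
  simp only [mul_zero, zero_mul, add_zero, ne_eq, OfNat.ofNat_ne_zero, not_false_eq_true,
    zero_pow] at hbound
  have hcont : ContinuousOn (fun t : ℝ => (t - x) ^ 4) (Icc 0 1) := by fun_prop
  refine squeeze_zero (fun n => ?_) (fun n => ?_) hbound
  · have := (abs_nonneg _).trans (abs_kantorovich_le (n := n) (ha n) hcont hcont fun t _ =>
      (abs_of_nonneg (by positivity)).le)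
    positivity
  · calc (n : ℝ) * kantorovich n (fun t => (t - x) ^ 4) (a n)
        ≤ n * (4 * (8 * (n ^ 2 + (n * a n - (n + 1) * x) ^ 4) + 1) / (n + 1) ^ 4) := by
          gcongr
          exact kantorovich_sub_pow_four_le (ha n) x
      _ = _ := by
          field_simp
          ring

end nodes

theorem tendsto_kantorovich_voronovskaya {g : ℝ → ℝ} {a : ℕ → ℝ} {x L : ℝ}
    (hg : ContDiffOn ℝ 2 g (Icc 0 1)) (hx : x ∈ Icc (0 : ℝ) 1) (ha : ∀ n, a n ∈ Icc (0 : ℝ) 1)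
    (haL : Tendsto (fun n : ℕ => n * (a n - x)) atTop (𝓝 L)) :
    Tendsto (fun n : ℕ => n * (kantorovich n g (a n) - g x)) atTop
      (𝓝 (derivWithin g (Icc 0 1) x * (1 / 2 + L - x) +
        derivWithin (derivWithin g (Icc 0 1)) (Icc 0 1) x * ((x - x ^ 2) / 2))) := by
  set b₁ := derivWithin g (Icc 0 1) x
  set b₂ := derivWithin (derivWithin g (Icc 0 1)) (Icc 0 1) x
  set R : ℝ → ℝ := fun t => g t - g x - b₁ * (t - x) - b₂ / 2 * (t - x) ^ 2
  have hRc : ContinuousOn R (Icc 0 1) := by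
    have := hg.continuousOn
    fun_prop
  have hdecomp : ∀ n, kantorovich n g (a n) - g x = b₁ * kantorovich n (fun t => t - x) (a n)
      + b₂ / 2 * kantorovich n (fun t => (t - x) ^ 2) (a n) + kantorovich n R (a n) := by
    intro n
    have hg_eq : g = fun t => g x + (b₁ * (t - x) + (b₂ / 2 * (t - x) ^ 2 + R t)) := by
      ext t; simp only [R]; ring
    conv_lhs => rw [hg_eq]
    rw [kantorovich_add continuousOn_const (by fun_prop), kantorovich_const,
      kantorovich_add (by fun_prop) (by fun_prop), kantorovich_const_mul,
      kantorovich_add (by fun_prop) hRc, kantorovich_const_mul]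
    ring
  have hR : Tendsto (fun n : ℕ => n * kantorovich n R (a n)) atTop (𝓝 0) := by
    refine tendsto_zero_of_forall_abs_le (tendsto_natCast_mul_kantorovich_sub_sq haL)
      (tendsto_natCast_mul_kantorovich_sub_pow_four ha haL) fun ε hε => ?_
    obtain ⟨K, hK⟩ := exists_abs_le_sq_add_pow_four isCompact_Icc hRc
      (isLittleO_taylor_two hg hx) hε
    refine ⟨K, fun n => ?_⟩
    have hbound := abs_kantorovich_le (n := n) (ha n) hRc (by fun_prop) hK
    rw [kantorovich_add (by fun_prop) (by fun_prop), kantorovich_const_mul,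
      kantorovich_const_mul] at hbound
    rw [abs_mul, Nat.abs_cast]
    calc (n : ℝ) * |kantorovich n R (a n)|
        ≤ n * (ε * kantorovich n (fun t => (t - x) ^ 2) (a n)
          + K * kantorovich n (fun t => (t - x) ^ 4) (a n)) := by gcongr
      _ = _ := by ring
  have h := (((tendsto_natCast_mul_kantorovich_sub haL).const_mul b₁).add
    ((tendsto_natCast_mul_kantorovich_sub_sq haL).const_mul (b₂ / 2))).add hR
  convert h.congr fun n => ?_ using 2
  · ring
  · rw [hdecomp]
    ring

lemma aFun_mem {μ x : ℝ} (hμ : 0 < 1 + μ) (hx : x ∈ Icc (0 : ℝ) 1) (n : ℕ) :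
    aFun μ n x ∈ Icc (0 : ℝ) 1 := by
  have hd : 0 < ((n : ℝ) + 1) * (1 + μ) := by positivity
  have hnum : 0 ≤ x / ((n + 1) * (1 + μ)) := div_nonneg hx.1 hd.le
  have hden : 0 < Real.log (1 + 1 / ((n + 1) * (1 + μ))) :=
    Real.log_pos (by linarith [one_div_pos.2 hd])
  refine ⟨div_nonneg (Real.log_nonneg (by linarith)) hden.le, (div_le_one hden).2 ?_⟩
  gcongr
  exact hx.2

lemma abs_log_one_add_sub_le {y : ℝ} (hy : |y| ≤ 1 / 2) :
    |Real.log (1 + y) - (y - y ^ 2 / 2)| ≤ 2 * |y| ^ 3 := by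
  have h := Real.abs_log_sub_add_sum_range_le (x := -y) (by rw [abs_neg]; linarith) 2
  simp only [Finset.sum_range_succ, Finset.sum_range_zero, abs_neg, sub_neg_eq_add] at h
  norm_num at h
  calc |Real.log (1 + y) - (y - y ^ 2 / 2)| = |-y + y ^ 2 / 2 + Real.log (1 + y)| := by ring_nf
    _ ≤ |y| ^ 3 / (1 - |y|) := h
    _ ≤ 2 * |y| ^ 3 := by
        rw [div_le_iff₀ (by linarith)]
        nlinarith [pow_nonneg (abs_nonneg y) 3]

lemma tendsto_log_one_add_mul_sub_div_sq (x : ℝ) :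
    Tendsto (fun y => (Real.log (1 + x * y) - x * Real.log (1 + y)) / y ^ 2) (𝓝[≠] 0)
      (𝓝 ((x - x ^ 2) / 2)) := by
  set ψ : ℝ → ℝ := fun y => Real.log (1 + y) - (y - y ^ 2 / 2)
  have hsmall : ∀ᶠ y in 𝓝 (0 : ℝ), |y| ≤ 1 / 2 ∧ |x * y| ≤ 1 / 2 :=
    (((by fun_prop : Continuous fun y : ℝ => |y|).tendsto' 0 0 (by simp)).eventually
      (ge_mem_nhds one_half_pos)).and
    (((by fun_prop : Continuous fun y : ℝ => |x * y|).tendsto' 0 0 (by simp)).eventually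
      (ge_mem_nhds one_half_pos))
  have hbound : Tendsto (fun y : ℝ => 2 * (|x| ^ 3 + |x|) * |y|) (𝓝[≠] 0) (𝓝 0) :=
    ((by fun_prop : Continuous fun y : ℝ => 2 * (|x| ^ 3 + |x|) * |y|).tendsto' 0 0
      (by simp)).mono_left nhdsWithin_le_nhds
  rw [← tendsto_sub_nhds_zero_iff]
  refine squeeze_zero_norm' ?_ hbound
  filter_upwards [self_mem_nhdsWithin, nhdsWithin_le_nhds hsmall] with y (hy0 : y ≠ 0) ⟨hy, hxy⟩
  have hsplit : (Real.log (1 + x * y) - x * Real.log (1 + y)) / y ^ 2 - (x - x ^ 2) / 2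
      = (ψ (x * y) - x * ψ y) / y ^ 2 := by
    simp only [ψ]
    field_simp
    ring
  rw [hsplit, Real.norm_eq_abs, abs_div, abs_of_pos (by positivity : 0 < y ^ 2),
    div_le_iff₀ (by positivity)]
  calc |ψ (x * y) - x * ψ y| ≤ |ψ (x * y)| + |x| * |ψ y| := by
        rw [← abs_mul]; exact abs_sub _ _
    _ ≤ 2 * |x * y| ^ 3 + |x| * (2 * |y| ^ 3) := by
        gcongr
        · exact abs_log_one_add_sub_le hxy
        · exact abs_log_one_add_sub_le hy
    _ = 2 * (|x| ^ 3 + |x|) * |y| * y ^ 2 := by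
        rw [abs_mul, ← sq_abs y]
        ring

lemma tendsto_natCast_mul_aFun_sub {μ : ℝ} (hμ : 0 < 1 + μ) (x : ℝ) :
    Tendsto (fun n : ℕ => n * (aFun μ n x - x)) atTop (𝓝 ((x - x ^ 2) / (2 * (1 + μ)))) := by
  set e : ℕ → ℝ := fun n => 1 / ((n + 1) * (1 + μ))
  have he_pos : ∀ n, 0 < e n := fun n => by positivity
  have hne : Tendsto (fun n : ℕ => n * e n) atTop (𝓝 (1 / (1 + μ))) := by
    refine ((tendsto_natCast_div_add_atTop (1 : ℝ)).div_const (1 + μ)).congr fun n => ?_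
    simp only [e]
    field_simp
  have he : Tendsto e atTop (𝓝[≠] 0) := by
    refine tendsto_nhdsWithin_iff.2 ⟨?_, Eventually.of_forall fun n => (he_pos n).ne'⟩
    simpa [e, div_mul_eq_div_div] using
      (tendsto_one_div_add_atTop_nhds_zero_nat (𝕜 := ℝ)).div_const (1 + μ)
  have hden := Real.tendsto_nat_mul_log_one_add_of_tendsto hne
  have hnum := (tendsto_log_one_add_mul_sub_div_sq x).comp he
  -- `n (a - x) = (n e)² ((log (1 + x e) - x log (1 + e)) / e²) / (n log (1 + e))`
  have h := ((hne.pow 2).mul hnum).div hden (by positivity)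
  convert h.congr' ?_ using 2
  · field_simp
  filter_upwards [eventually_ne_atTop 0] with n hn
  have hlog : 0 < Real.log (1 + e n) := Real.log_pos (by linarith [he_pos n])
  have haFun : aFun μ n x = Real.log (1 + x * e n) / Real.log (1 + e n) := by
    rw [aFun, div_eq_mul_one_div x]
  simp only [Pi.div_apply, Function.comp, haFun]
  field_simp [(he_pos n).ne', hlog.ne']

theorem stmt11 (μ : ℝ) (hμ : 0 < μ) (f : ℝ → ℝ)
    (hf : ContDiffOn ℝ 2 f (Set.Icc 0 1)) (x : ℝ) (hx : x ∈ Set.Icc (0:ℝ) 1) :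
    Tendsto (fun n : ℕ => (n : ℝ) * (LK μ n f x - f x)) atTop
      (nhds (lnMu μ x *
        (derivWithin (fun t => f t / lnMu μ t) (Set.Icc 0 1) x *
            (1 / 2 + (x - x ^ 2) / (2 * (1 + μ)) - x) +
          derivWithin (derivWithin (fun t => f t / lnMu μ t) (Set.Icc 0 1))
              (Set.Icc 0 1) x *
            ((x - x ^ 2) / 2)))) := by
  have hln_pos : ∀ t ∈ Icc (0 : ℝ) 1, 0 < lnMu μ t := fun t ht =>
    Real.log_pos (by linarith [ht.1])
  have hln : ContDiffOn ℝ 2 (lnMu μ) (Icc 0 1) :=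
    (contDiff_const.add contDiff_id).contDiffOn.log fun t ht => by
      simp only [id]; linarith [ht.1]
  have hg : ContDiffOn ℝ 2 (fun t => f t / lnMu μ t) (Icc 0 1) :=
    hf.div hln fun t ht => (hln_pos t ht).ne'
  have h1μ : 0 < 1 + μ := by linarith
  have h := (tendsto_kantorovich_voronovskaya hg hx (fun n => aFun_mem h1μ hx n)
    (tendsto_natCast_mul_aFun_sub h1μ x)).const_mul (lnMu μ x)
  refine h.congr fun n => ?_
  rw [mul_left_comm, mul_sub, mul_div_cancel₀ (f x) (hln_pos x hx).ne']
  rfl
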